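/- arXiv:2504.04165 — 3 statements merged into one kernel-verified Lean document; each statement's English description precedes it below -/
import Mathlib

section
/- Let B ∈ C² with div(B) = 0 and B(y) ≠ 0 for all y ∈ ℝ³, fix x₀, v₀ ∈ ℝ³, and let (x, h) be the unique global solution of the limit system. Then x satisfies the second order ODE x''(t) = μ₀ |B(x(t))| div(b)(x(t)) b(x(t)) + (|v₀|² − 2μ₀|B(x(t))|) (Db)(x(t))·b(x(t)) for all t ∈ ℝ, together with x(0) = x₀ and x'(0) = h₀ b(x₀), where Db denotes the Jacobian matrix of b. -/
noncomputable section

open Real Filter Topology MeasureTheory intervalIntegral Bornology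

abbrev E3 : Type := EuclideanSpace ℝ (Fin 3)

def cross3 (u v : E3) : E3 :=
  (WithLp.equiv 2 (Fin 3 → ℝ)).symm
    ![u 1 * v 2 - u 2 * v 1, u 2 * v 0 - u 0 * v 2, u 0 * v 1 - u 1 * v 0]

def divg (F : E3 → E3) (y : E3) : ℝ :=
  ∑ i : Fin 3, fderiv ℝ F y (EuclideanSpace.single i (1:ℝ)) i

def curl3 (F : E3 → E3) (y : E3) : E3 :=
  (WithLp.equiv 2 (Fin 3 → ℝ)).symm
    ![fderiv ℝ F y (EuclideanSpace.single 1 (1:ℝ)) 2 - fderiv ℝ F y (EuclideanSpace.single 2 (1:ℝ)) 1,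
      fderiv ℝ F y (EuclideanSpace.single 2 (1:ℝ)) 0 - fderiv ℝ F y (EuclideanSpace.single 0 (1:ℝ)) 2,
      fderiv ℝ F y (EuclideanSpace.single 0 (1:ℝ)) 1 - fderiv ℝ F y (EuclideanSpace.single 1 (1:ℝ)) 0]

def bdir (B : E3 → E3) (y : E3) : E3 := ‖B y‖⁻¹ • B y

def IsLorentzSol (B : E3 → E3) (ω : ℝ) (x₀ v₀ : E3) (x : ℝ → E3) : Prop :=
  x 0 = x₀ ∧ deriv x 0 = v₀ ∧ Differentiable ℝ x ∧
    ∀ t : ℝ, HasDerivAt (deriv x) (ω • cross3 (deriv x t) (B (x t))) t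

def IsLimitSol (B : E3 → E3) (x₀ v₀ : E3) (x : ℝ → E3) (h : ℝ → ℝ) : Prop :=
  x 0 = x₀ ∧ h 0 = (inner ℝ v₀ (bdir B x₀) : ℝ) ∧
    (∀ t : ℝ, HasDerivAt x (h t • bdir B (x t)) t) ∧
    (∀ t : ℝ, HasDerivAt h ((‖v₀‖ ^ 2 - h t ^ 2) / 2 * divg (bdir B) (x t)) t)

def IsCkBounded (k : ℕ) (B : E3 → E3) : Prop :=
  ContDiff ℝ k B ∧ ∀ i ≤ k, ∃ M : ℝ, ∀ y : E3, ‖iteratedFDeriv ℝ i B y‖ ≤ M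

def MinimalGrowth (γ : ℝ) (B : E3 → E3) : Prop :=
  ∃ R C : ℝ, 0 < R ∧ 0 < C ∧ ∀ y : E3, R ≤ ‖y‖ → C / ‖y‖ ^ γ ≤ ‖B y‖

/-! Since `B = |B| • b`, the product rule for the divergence together with `div B = 0` gives
`D|B|(b) = -|B| div b`. Along the limit system this makes the magnetic moment
`(|v₀|² - h²) / (2|B(x)|)` a conserved quantity, equal to `μ₀`. Differentiating `x' = h b(x)`
gives `x'' = h' b(x) + h² Db(x) b(x)`, and conservation turns `h' = (|v₀|² - h²)/2 · div b` into
`μ₀ |B| div b` and `h²` into `|v₀|² - 2 μ₀ |B|`. -/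

theorem norm_smul_bdir (B : E3 → E3) (y : E3) : ‖B y‖ • bdir B y = B y := by
  by_cases hy : B y = 0
  · simp [bdir, hy]
  · simp [bdir, smul_smul, hy]

theorem differentiableAt_bdir {B : E3 → E3} {y : E3} (hB : DifferentiableAt ℝ B y)
    (hy : B y ≠ 0) : DifferentiableAt ℝ (bdir B) y :=
  ((hB.norm ℝ hy).inv (norm_ne_zero_iff.mpr hy)).smul hB

theorem divg_smul {f : E3 → ℝ} {F : E3 → E3} {y : E3} (hf : DifferentiableAt ℝ f y)
    (hF : DifferentiableAt ℝ F y) :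
    divg (fun z => f z • F z) y = f y * divg F y + fderiv ℝ f y (F y) := by
  have hsum : fderiv ℝ f y (F y) = ∑ i, F y i * fderiv ℝ f y (EuclideanSpace.single i 1) := by
    conv_lhs => rw [← (EuclideanSpace.basisFun (Fin 3) ℝ).sum_repr (F y)]
    simp
  simp only [divg, fderiv_fun_smul hf hF, hsum, Finset.mul_sum, ← Finset.sum_add_distrib]
  refine Finset.sum_congr rfl fun i _ => ?_
  simp only [add_apply, smul_apply, ContinuousLinearMap.smulRight_apply, PiLp.add_apply,
    PiLp.smul_apply, smul_eq_mul]
  ring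

theorem fderiv_norm_apply_bdir {B : E3 → E3} {y : E3} (hB : DifferentiableAt ℝ B y)
    (hy : B y ≠ 0) (hdiv : divg B y = 0) :
    fderiv ℝ (fun z => ‖B z‖) y (bdir B y) = -(‖B y‖ * divg (bdir B) y) := by
  have h := divg_smul (hB.norm ℝ hy) (differentiableAt_bdir hB hy)
  rw [funext (norm_smul_bdir B), hdiv] at h
  linarith

theorem hasDerivAt_norm_comp_of_hasDerivAt {B : E3 → E3} {x : ℝ → E3} {h : ℝ → ℝ} {t : ℝ}
    (hB : DifferentiableAt ℝ B (x t)) (hB0 : B (x t) ≠ 0) (hdiv : divg B (x t) = 0)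
    (hx : HasDerivAt x (h t • bdir B (x t)) t) :
    HasDerivAt (fun s => ‖B (x s)‖) (-(h t * ‖B (x t)‖ * divg (bdir B) (x t))) t := by
  refine ((hB.norm ℝ hB0).hasFDerivAt.comp_hasDerivAt t hx).congr_deriv ?_
  rw [map_smul, fderiv_norm_apply_bdir hB hB0 hdiv, smul_eq_mul]
  ring

def magneticMoment (B : E3 → E3) (v₀ y : E3) (η : ℝ) : ℝ :=
  (‖v₀‖ ^ 2 - η ^ 2) / (2 * ‖B y‖)

namespace IsLimitSol

variable {B : E3 → E3} {x₀ v₀ : E3} {x : ℝ → E3} {h : ℝ → ℝ}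

theorem magneticMoment_eq (hB : Differentiable ℝ B) (hB0 : ∀ y, B y ≠ 0)
    (hdiv : ∀ y, divg B y = 0) (hlim : IsLimitSol B x₀ v₀ x h) (t : ℝ) :
    magneticMoment B v₀ (x t) (h t) = magneticMoment B v₀ x₀ (inner ℝ v₀ (bdir B x₀)) := by
  obtain ⟨hx0, hh0, hx, hh⟩ := hlim
  have hconst : ∀ s, HasDerivAt (fun s => magneticMoment B v₀ (x s) (h s)) 0 s := by
    intro s
    have hN := hasDerivAt_norm_comp_of_hasDerivAt (hB (x s)) (hB0 (x s)) (hdiv (x s)) (hx s)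
    have hN0 : ‖B (x s)‖ ≠ 0 := norm_ne_zero_iff.mpr (hB0 (x s))
    refine ((((hh s).fun_pow 2).const_sub (‖v₀‖ ^ 2)).div (hN.const_mul 2)
      (mul_ne_zero two_ne_zero hN0)).congr_deriv ?_
    field_simp
    ring
  rw [← hh0, ← hx0]
  exact is_const_of_deriv_eq_zero (fun s => (hconst s).differentiableAt)
    (fun s => (hconst s).deriv) t 0

theorem deriv_zero (hlim : IsLimitSol B x₀ v₀ x h) :
    deriv x 0 = (inner ℝ v₀ (bdir B x₀) : ℝ) • bdir B x₀ := by
  rw [(hlim.2.2.1 0).deriv, hlim.2.1, hlim.1]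

theorem hasDerivAt_deriv (hB : Differentiable ℝ B) (hB0 : ∀ y, B y ≠ 0)
    (hlim : IsLimitSol B x₀ v₀ x h) (t : ℝ) :
    HasDerivAt (deriv x) (((‖v₀‖ ^ 2 - h t ^ 2) / 2 * divg (bdir B) (x t)) • bdir B (x t)
      + h t ^ 2 • fderiv ℝ (bdir B) (x t) (bdir B (x t))) t := by
  obtain ⟨-, -, hx, hh⟩ := hlim
  rw [show deriv x = fun s => h s • bdir B (x s) from funext fun s => (hx s).deriv]
  refine ((hh t).smul ((differentiableAt_bdir (hB (x t)) (hB0 (x t))).hasFDerivAt.comp_hasDerivAt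
    t (hx t))).congr_deriv ?_
  rw [map_smul, smul_smul, Function.comp_apply, ← sq, add_comm]

end IsLimitSol

theorem limit_trajectory_second_order_ode
    (B : E3 → E3) (hB : IsCkBounded 2 B) (hdiv : ∀ y : E3, divg B y = 0)
    (hB0 : ∀ y : E3, B y ≠ 0) (x₀ v₀ : E3)
    (x : ℝ → E3) (h : ℝ → ℝ) (hlim : IsLimitSol B x₀ v₀ x h) :
    x 0 = x₀ ∧ deriv x 0 = (inner ℝ v₀ (bdir B x₀) : ℝ) • bdir B x₀ ∧
    ∀ t : ℝ, HasDerivAt (deriv x)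
      ((((‖v₀‖ ^ 2 - (inner ℝ v₀ (bdir B x₀) : ℝ) ^ 2) / (2 * ‖B x₀‖)) * ‖B (x t)‖
          * divg (bdir B) (x t)) • bdir B (x t)
        + (‖v₀‖ ^ 2
            - 2 * ((‖v₀‖ ^ 2 - (inner ℝ v₀ (bdir B x₀) : ℝ) ^ 2) / (2 * ‖B x₀‖)) * ‖B (x t)‖)
            • fderiv ℝ (bdir B) (x t) (bdir B (x t))) t := by
  have hBd : Differentiable ℝ B := hB.1.differentiable (by norm_num)
  refine ⟨hlim.1, hlim.deriv_zero, fun t => ?_⟩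
  have hμ : (‖v₀‖ ^ 2 - h t ^ 2) / 2
      = magneticMoment B v₀ x₀ (inner ℝ v₀ (bdir B x₀)) * ‖B (x t)‖ := by
    rw [← hlim.magneticMoment_eq hBd hB0 hdiv t, magneticMoment]
    field_simp [norm_ne_zero_iff.mpr (hB0 (x t))]
  convert hlim.hasDerivAt_deriv hBd hB0 t using 3
  · rw [hμ, magneticMoment]
  · unfold magneticMoment at hμ
    linear_combination 2 * hμ
end
end

section
/- Let b : ℝ³ → ℝ³ be a continuously differentiable unit vector field, i.e. |b(x)| = 1 for all x ∈ ℝ³, and let v ∈ ℝ³ be a fixed vector. Then for every x ∈ ℝ³: (Db(x)·(v × b(x))) × (v × b(x)) = [(b(x)·v)(v·curl(b)(x)) − |v|²(b(x)·curl(b)(x)) − (Db(x)·v)·(v × b(x))] b(x), where Db denotes the Jacobian matrix of b. -/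
noncomputable section

open Real Filter Topology MeasureTheory intervalIntegral Bornology

/-! Since `|b| = 1`, `Db(x)` maps into `b(x)^⊥`, and so does `u ↦ u × b(x)`. Hence with
`w = v × b(x)` the left side is the cross product of two vectors orthogonal to the unit vector
`b(x)`, i.e. the multiple `⟨Db w × w, b⟩ b = ⟨Db w, w × b⟩ b = -⟨Db w, v⟩ b` (BAC–CAB).
The antisymmetric part of `Db` is `u ↦ curl b × u`, which trades `⟨Db w, v⟩` for
`⟨Db v, w⟩` plus the curl terms. -/

theorem inner_fderiv_apply_self_eq_zero {E F : Type*} [NormedAddCommGroup E] [NormedSpace ℝ E]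
    [NormedAddCommGroup F] [InnerProductSpace ℝ F] {f : E → F} {c : ℝ} (hf : ∀ y, ‖f y‖ = c)
    {x : E} (hfx : DifferentiableAt ℝ f x) (u : E) : inner ℝ (fderiv ℝ f x u) (f x) = 0 := by
  have hconst : (fun y => inner ℝ (f y) (f y)) = fun _ => c ^ 2 := by
    funext y
    rw [real_inner_self_eq_norm_sq, hf]
  have h := fderiv_inner_apply ℝ hfx hfx u
  rw [hconst, fderiv_const_apply, zero_apply, real_inner_comm _ (f x)] at h
  linarith

open Matrix WithLp

theorem inner_eq_dotProduct_ofLp (x y : E3) : inner ℝ x y = ofLp x ⬝ᵥ ofLp y := by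
  rw [EuclideanSpace.inner_eq_star_dotProduct, star_trivial, dotProduct_comm]

theorem cross3_eq_toLp_crossProduct (u w : E3) : cross3 u w = toLp 2 (ofLp u ⨯₃ ofLp w) := rfl

theorem inner_cross3_self_right (u w : E3) : inner ℝ (cross3 u w) w = 0 := by
  rw [inner_eq_dotProduct_ofLp, cross3_eq_toLp_crossProduct, dotProduct_comm]
  exact dot_cross_self _ _

theorem inner_cross3_left (u v w : E3) :
    inner ℝ (cross3 u v) w = inner ℝ u (cross3 v w) := by
  simp only [inner_eq_dotProduct_ofLp, cross3_eq_toLp_crossProduct]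
  rw [dotProduct_comm, triple_product_permutation]

theorem cross3_cross3_left (u v w : E3) :
    cross3 (cross3 u v) w = inner ℝ u w • v - inner ℝ v w • u := by
  simp only [inner_eq_dotProduct_ofLp, cross3_eq_toLp_crossProduct]
  rw [cross_cross_eq_smul_sub_smul]
  rfl

theorem cross3_cross3_right (u v w : E3) :
    cross3 u (cross3 v w) = inner ℝ u w • v - inner ℝ v u • w := by
  simp only [inner_eq_dotProduct_ofLp, cross3_eq_toLp_crossProduct]
  rw [cross_cross_eq_smul_sub_smul']
  rfl

theorem cross3_zero_right (u : E3) : cross3 u 0 = 0 := by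
  simp [cross3_eq_toLp_crossProduct]

theorem cross3_eq_inner_smul_of_inner_eq_zero {u w n : E3} (hn : ‖n‖ = 1)
    (hu : inner ℝ u n = 0) (hw : inner ℝ w n = 0) :
    cross3 u w = inner ℝ (cross3 u w) n • n := by
  have hperp : cross3 n (cross3 u w) = 0 := by
    rw [cross3_cross3_right, real_inner_comm, hw, hu, zero_smul, zero_smul, sub_zero]
  have h := cross3_cross3_right n n (cross3 u w)
  rw [hperp, cross3_zero_right, real_inner_self_eq_norm_sq, hn, real_inner_comm] at h
  rw [one_pow, one_smul, eq_comm, sub_eq_zero] at h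
  exact h.symm

theorem inner_apply_eq_sum (L : E3 →L[ℝ] E3) (u w : E3) :
    inner ℝ (L u) w = ∑ j, ∑ i, u j * L (EuclideanSpace.single j 1) i * w i := by
  conv_lhs => rw [← (EuclideanSpace.basisFun (Fin 3) ℝ).sum_repr u]
  simp [map_sum, sum_inner, inner_eq_dotProduct_ofLp, dotProduct]

theorem inner_fderiv_sub_inner_fderiv_eq_inner_curl3 (F : E3 → E3) (y u w : E3) :
    inner ℝ (fderiv ℝ F y u) w - inner ℝ (fderiv ℝ F y w) u
      = inner ℝ (curl3 F y) (cross3 u w) := by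
  rw [inner_apply_eq_sum, inner_apply_eq_sum, inner_eq_dotProduct_ofLp]
  simp only [curl3, cross3, dotProduct, Fin.sum_univ_three, equiv_symm_apply, cons_val]
  ring

theorem unit_field_cross_identity
    (b : E3 → E3) (hb : ContDiff ℝ 1 b) (hunit : ∀ x : E3, ‖b x‖ = 1) (v : E3) :
    ∀ x : E3,
      cross3 (fderiv ℝ b x (cross3 v (b x))) (cross3 v (b x))
      = ((inner ℝ (b x) v : ℝ) * (inner ℝ v (curl3 b x) : ℝ)
          - ‖v‖ ^ 2 * (inner ℝ (b x) (curl3 b x) : ℝ)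
          - (inner ℝ (fderiv ℝ b x v) (cross3 v (b x)) : ℝ)) • b x := by
  intro x
  set w := cross3 v (b x)
  have hDb : ∀ u, inner ℝ (fderiv ℝ b x u) (b x) = 0 :=
    inner_fderiv_apply_self_eq_zero hunit ((hb.differentiable one_ne_zero).differentiableAt)
  have hwb : cross3 w (b x) = inner ℝ v (b x) • b x - v := by
    rw [cross3_cross3_left, real_inner_self_eq_norm_sq, hunit, one_pow, one_smul]
  have hcurl := inner_fderiv_sub_inner_fderiv_eq_inner_curl3 b x w v
  rw [cross3_cross3_left, real_inner_self_eq_norm_sq, inner_sub_right, real_inner_smul_right,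
    real_inner_smul_right, real_inner_comm v (curl3 b x),
    real_inner_comm (b x) (curl3 b x)] at hcurl
  calc cross3 (fderiv ℝ b x w) w
      = inner ℝ (cross3 (fderiv ℝ b x w) w) (b x) • b x :=
        cross3_eq_inner_smul_of_inner_eq_zero (hunit x) (hDb w) (inner_cross3_self_right v (b x))
    _ = (-inner ℝ (fderiv ℝ b x w) v) • b x := by
        rw [inner_cross3_left, hwb, inner_sub_right, real_inner_smul_right, hDb w, mul_zero,
          zero_sub]
    _ = _ := by
        congr 1
        linarith
end
end

section
/- Let B ∈ C² with B(y) ≠ 0 for all y ∈ ℝ³ and with minimal growth of order γ ≥ 0 at infinity, and fix x₀, v₀ ∈ ℝ³. Then there exists a constant C > 0, independent of t and ω, such that for all t ≥ 0 and all ω > 0 the integrated perpendicular velocity satisfies |∫₀ᵗ [v_ω(s) − (v_ω(s)·b(x_ω(s))) b(x_ω(s))] ds| ≤ (C/ω)(1 + t^{2γ+1}). -/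
/-!
Along the motion the speed is conserved, and since `v' = ω v × B(x)` the perpendicular velocity
is `v - (v·b)b = G(x) × (v × B(x)) = ω⁻¹ G(x) × v'`, where `G = B / |B|²` is `B` followed by the
inversion in the unit sphere. Integrating by parts, `ω ∫ v_⊥` equals the boundary term
`G(x) × v` minus `∫ (DG(x) v) × v`. The inversion has differential of norm `|w|⁻²`, so
`|DG| ≤ |DB| / |B|²`, and the growth condition gives `|B(x(s))|⁻¹ ≤ c (1 + t)^γ` on `[0, t]`
because `|x(s)| ≤ |x₀| + |v₀| s`. Hence `|∫₀ᵗ v_⊥| ≤ ω⁻¹ (C₁ (1 + t)^γ + C₂ t (1 + t)^{2γ})`.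
-/

noncomputable section

open Real Filter Topology MeasureTheory intervalIntegral Bornology

open EuclideanGeometry (inversion)
open Set

section CrossProduct

lemma cross3_eq_crossProduct (u v : E3) :
    cross3 u v = WithLp.toLp 2 (crossProduct (WithLp.ofLp u) (WithLp.ofLp v)) := by
  ext i; fin_cases i <;> simp [cross3, cross_apply]

lemma inner_eq_ofLp_dotProduct (u v : E3) :
    (inner ℝ u v : ℝ) = WithLp.ofLp u ⬝ᵥ WithLp.ofLp v := by
  rw [EuclideanSpace.inner_eq_star_dotProduct, star_trivial, dotProduct_comm]

lemma inner_self_cross3 (v w : E3) : (inner ℝ v (cross3 v w) : ℝ) = 0 := by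
  rw [inner_eq_ofLp_dotProduct, cross3_eq_crossProduct]
  exact dot_self_cross _ _

lemma norm_cross3_le (u v : E3) : ‖cross3 u v‖ ≤ ‖u‖ * ‖v‖ := by
  have lagrange : ‖cross3 u v‖ ^ 2 = ‖u‖ ^ 2 * ‖v‖ ^ 2 - (inner ℝ u v : ℝ) ^ 2 := by
    simp only [← real_inner_self_eq_norm_sq, inner_eq_ofLp_dotProduct, cross3_eq_crossProduct,
      cross_dot_cross, dotProduct_comm (WithLp.ofLp v) (WithLp.ofLp u)]
    ring
  exact le_of_pow_le_pow_left₀ two_ne_zero (by positivity)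
    (by rw [mul_pow, lagrange]; nlinarith)

lemma cross3_cross3_eq_smul_sub_smul (u v w : E3) :
    cross3 u (cross3 v w) = (inner ℝ u w : ℝ) • v - (inner ℝ v u : ℝ) • w := by
  simp only [cross3_eq_crossProduct, inner_eq_ofLp_dotProduct,
    cross_cross_eq_smul_sub_smul']
  rfl

def crossCLM : E3 →L[ℝ] E3 →L[ℝ] E3 :=
  LinearMap.mkContinuous₂
    (LinearMap.mk₂ ℝ cross3
      (fun a b v => by simp [cross3_eq_crossProduct])
      (fun c a v => by simp [cross3_eq_crossProduct])
      (fun a u v => by simp [cross3_eq_crossProduct])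
      (fun c a v => by simp [cross3_eq_crossProduct]))
    1 (fun u v => by simpa using norm_cross3_le u v)

@[simp] lemma crossCLM_apply (u v : E3) : crossCLM u v = cross3 u v := rfl

end CrossProduct

section Inversion

variable {E F : Type*} [NormedAddCommGroup E] [NormedSpace ℝ E]
  [NormedAddCommGroup F] [InnerProductSpace ℝ F]

lemma inversion_zero_one_apply (w : F) : inversion 0 1 w = (‖w‖ ^ 2)⁻¹ • w := by
  simp [inversion]

lemma norm_inversion_zero_one (w : F) : ‖inversion 0 1 w‖ = ‖w‖⁻¹ := by
  rcases eq_or_ne ‖w‖ 0 with hw | hw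
  · simp [inversion_zero_one_apply, hw]
  · rw [inversion_zero_one_apply, norm_smul, norm_inv, norm_pow, norm_norm]
    field_simp

lemma norm_fderiv_inversion_comp_le {f : E → F} {y : E} (hf : DifferentiableAt ℝ f y)
    (hy : f y ≠ 0) :
    ‖fderiv ℝ (inversion 0 1 ∘ f) y‖ ≤ ‖fderiv ℝ f y‖ / ‖f y‖ ^ 2 := by
  rw [((EuclideanGeometry.hasFDerivAt_inversion (R := 1) hy).comp y hf.hasFDerivAt).fderiv]
  calc _ ≤ ‖(1 / dist (f y) 0) ^ 2 • ((ℝ ∙ (f y - 0))ᗮ.reflection : F →L[ℝ] F)‖ *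
        ‖fderiv ℝ f y‖ := ContinuousLinearMap.opNorm_comp_le _ _
    _ ≤ (1 / ‖f y‖) ^ 2 * 1 * ‖fderiv ℝ f y‖ := by
        gcongr
        rw [norm_smul, dist_zero_right, norm_pow, norm_div, norm_one, norm_norm]
        gcongr
        exact LinearIsometry.norm_toContinuousLinearMap_le _
    _ = ‖fderiv ℝ f y‖ / ‖f y‖ ^ 2 := by ring

end Inversion

theorem norm_intervalIntegral_le_of_hasDerivAt_smul_add {E : Type*} [NormedAddCommGroup E]
    [NormedSpace ℝ E] [CompleteSpace E] {f r H : ℝ → E} {ω K t : ℝ} (hω : 0 < ω) (ht : 0 ≤ t)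
    (hf : Continuous f) (hH : ∀ s ∈ Icc 0 t, HasDerivAt H (ω • f s + r s) s)
    (hr : ∀ s ∈ Icc 0 t, ‖r s‖ ≤ K) :
    ‖∫ s in (0:ℝ)..t, f s‖ ≤ ω⁻¹ * (‖H t - H 0‖ + K * t) := by
  set Φ : ℝ → E := fun u => ω • (∫ s in (0:ℝ)..u, f s) - H u
  have hΦ : ∀ s ∈ Icc 0 t, HasDerivWithinAt Φ (-r s) (Icc 0 t) s := fun s hs => by
    have := ((hf.integral_hasStrictDerivAt 0 s).hasDerivAt.const_smul ω).sub (hH s hs)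
    rw [sub_add_cancel_left] at this
    exact this.hasDerivWithinAt
  have hmvt := norm_image_sub_le_of_norm_deriv_le_segment' hΦ
    (fun s hs => (norm_neg (r s)).trans_le (hr s (Ico_subset_Icc_self hs))) t ⟨ht, le_rfl⟩
  have hsplit : ω • ∫ s in (0:ℝ)..t, f s = (Φ t - Φ 0) + (H t - H 0) := by
    simp only [Φ, intervalIntegral.integral_same, smul_zero]; abel
  rw [le_inv_mul_iff₀ hω, ← Real.norm_of_nonneg hω.le, ← norm_smul, hsplit]
  calc _ ≤ ‖Φ t - Φ 0‖ + ‖H t - H 0‖ := norm_add_le _ _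
    _ ≤ _ := by rw [sub_zero] at hmvt; linarith

lemma sub_inner_bdir_smul_bdir_eq_cross3 {B : E3 → E3} {y : E3} (hy : B y ≠ 0) (v : E3) :
    v - (inner ℝ v (bdir B y) : ℝ) • bdir B y
      = cross3 (inversion 0 1 (B y)) (cross3 v (B y)) := by
  rw [cross3_cross3_eq_smul_sub_smul, inversion_zero_one_apply, real_inner_smul_left,
    real_inner_self_eq_norm_sq, real_inner_smul_right, bdir, real_inner_smul_right, smul_smul]
  field_simp
  rw [one_smul]

namespace IsLorentzSol

variable {B : E3 → E3} {ω : ℝ} {x₀ v₀ : E3} {x : ℝ → E3}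

lemma hasDerivAt (hx : IsLorentzSol B ω x₀ v₀ x) (t : ℝ) : HasDerivAt x (deriv x t) t :=
  (hx.2.2.1 t).hasDerivAt

lemma hasDerivAt_deriv (hx : IsLorentzSol B ω x₀ v₀ x) (t : ℝ) :
    HasDerivAt (deriv x) (ω • cross3 (deriv x t) (B (x t))) t :=
  hx.2.2.2 t

lemma norm_deriv (hx : IsLorentzSol B ω x₀ v₀ x) (t : ℝ) : ‖deriv x t‖ = ‖v₀‖ := by
  have hconst : ∀ s, HasDerivAt (‖deriv x ·‖ ^ 2) 0 s := fun s => by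
    simpa [inner_smul_right, inner_self_cross3] using (hx.hasDerivAt_deriv s).norm_sq
  have := is_const_of_deriv_eq_zero (fun s => (hconst s).differentiableAt)
    (fun s => (hconst s).deriv) t 0
  rwa [hx.2.1, sq_eq_sq₀ (norm_nonneg _) (norm_nonneg _)] at this

lemma norm_le (hx : IsLorentzSol B ω x₀ v₀ x) (t : ℝ) : ‖x t‖ ≤ ‖x₀‖ + ‖v₀‖ * |t| := by
  have := convex_univ.norm_image_sub_le_of_norm_deriv_le
    (fun s _ => (hx.hasDerivAt s).differentiableAt) (fun s _ => (hx.norm_deriv s).le)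
    (mem_univ 0) (mem_univ t)
  rw [hx.1, sub_zero, Real.norm_eq_abs] at this
  calc ‖x t‖ ≤ ‖x₀‖ + ‖x t - x₀‖ := norm_le_insert' _ _
    _ ≤ _ := by linarith

lemma norm_integral_perpendicular_velocity_le (hx : IsLorentzSol B ω x₀ v₀ x)
    (hB : Differentiable ℝ B) (hB0 : ∀ y, B y ≠ 0) (hω : 0 < ω) {t M L : ℝ} (ht : 0 ≤ t)
    (hM : ∀ s ∈ Icc 0 t, ‖fderiv ℝ B (x s)‖ ≤ M) (hL : ∀ s ∈ Icc 0 t, ‖B (x s)‖⁻¹ ≤ L) :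
    ‖∫ s in (0:ℝ)..t,
        (deriv x s - (inner ℝ (deriv x s) (bdir B (x s)) : ℝ) • bdir B (x s))‖
      ≤ ω⁻¹ * (2 * L * ‖v₀‖ + M * L ^ 2 * ‖v₀‖ ^ 2 * t) := by
  set G : E3 → E3 := inversion 0 1 ∘ B
  have hG : Differentiable ℝ G := fun y =>
    (differentiableAt_const _).inversion (differentiableAt_const _) (hB y) (hB0 y)
  have hxd : Differentiable ℝ x := fun s => (hx.hasDerivAt s).differentiableAt
  have hvd : Differentiable ℝ (deriv x) := fun s => (hx.hasDerivAt_deriv s).differentiableAt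
  have hH : ∀ s ∈ Icc 0 t, HasDerivAt (fun u => cross3 (G (x u)) (deriv x u))
      (ω • cross3 (G (x s)) (cross3 (deriv x s) (B (x s)))
        + cross3 (fderiv ℝ G (x s) (deriv x s)) (deriv x s)) s := fun s _ => by
    have := crossCLM.hasDerivAt_of_bilinear
      (fun _ => (hG (x s)).hasFDerivAt.comp_hasDerivAt s (hx.hasDerivAt s))
      (fun _ => hx.hasDerivAt_deriv s)
    simpa [map_smul] using this
  have hr : ∀ s ∈ Icc 0 t, ‖cross3 (fderiv ℝ G (x s) (deriv x s)) (deriv x s)‖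
      ≤ M * L ^ 2 * ‖v₀‖ ^ 2 := fun s hs => by
    have hDG : ‖fderiv ℝ G (x s)‖ ≤ M * L ^ 2 := calc
      _ ≤ ‖fderiv ℝ B (x s)‖ * ‖B (x s)‖⁻¹ ^ 2 := by
          rw [inv_pow, ← div_eq_mul_inv]; exact norm_fderiv_inversion_comp_le (hB _) (hB0 _)
      _ ≤ M * L ^ 2 := by
          gcongr
          exacts [(norm_nonneg _).trans (hM s hs), hM s hs, hL s hs]
    calc _ ≤ ‖fderiv ℝ G (x s)‖ * ‖deriv x s‖ * ‖deriv x s‖ := by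
          grw [norm_cross3_le, ContinuousLinearMap.le_opNorm]
      _ ≤ M * L ^ 2 * ‖v₀‖ ^ 2 := by rw [hx.norm_deriv, mul_assoc, ← sq]; gcongr
  have hHb : ∀ s ∈ Icc 0 t, ‖cross3 (G (x s)) (deriv x s)‖ ≤ L * ‖v₀‖ := fun s hs => by
    grw [norm_cross3_le, hx.norm_deriv, show ‖G (x s)‖ = ‖B (x s)‖⁻¹ from norm_inversion_zero_one _,
      hL s hs]
  have hf : Continuous fun s => crossCLM (G (x s)) (crossCLM (deriv x s) (B (x s))) := by
    have := hG.continuous; have := hxd.continuous; have := hvd.continuous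
    have := hB.continuous
    fun_prop
  rw [intervalIntegral.integral_congr
    (g := fun s => cross3 (G (x s)) (cross3 (deriv x s) (B (x s))))
    (fun s _ => sub_inner_bdir_smul_bdir_eq_cross3 (hB0 _) _)]
  refine (norm_intervalIntegral_le_of_hasDerivAt_smul_add hω ht hf hH hr).trans ?_
  grw [norm_sub_le, hHb t ⟨ht, le_rfl⟩, hHb 0 ⟨le_rfl, ht⟩]
  exact le_of_eq (by ring)

lemma inv_norm_le_mul_one_add_rpow (hx : IsLorentzSol B ω x₀ v₀ x) {c γ : ℝ} (hc : 0 ≤ c)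
    (hγ : 0 ≤ γ) (hinv : ∀ y, ‖B y‖⁻¹ ≤ c * (1 + ‖y‖) ^ γ) {s t : ℝ} (hs : s ∈ Icc 0 t) :
    ‖B (x s)‖⁻¹ ≤ c * (1 + ‖x₀‖ + ‖v₀‖) ^ γ * (1 + t) ^ γ := by
  have ht : 0 ≤ t := hs.1.trans hs.2
  have hxs : 1 + ‖x s‖ ≤ (1 + ‖x₀‖ + ‖v₀‖) * (1 + t) := by
    have := hx.norm_le s
    rw [abs_of_nonneg hs.1] at this
    nlinarith [mul_le_mul_of_nonneg_left hs.2 (norm_nonneg v₀),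
      mul_nonneg (norm_nonneg x₀) ht, norm_nonneg v₀]
  calc _ ≤ c * (1 + ‖x s‖) ^ γ := hinv _
    _ ≤ c * ((1 + ‖x₀‖ + ‖v₀‖) * (1 + t)) ^ γ := by gcongr
    _ = _ := by rw [Real.mul_rpow (by positivity) (by linarith), mul_assoc]

end IsLorentzSol

lemma MinimalGrowth.exists_inv_norm_le {γ : ℝ} {B : E3 → E3} (hgrowth : MinimalGrowth γ B)
    (hB : Continuous B) (hB0 : ∀ y, B y ≠ 0) (hγ : 0 ≤ γ) :
    ∃ c, 0 ≤ c ∧ ∀ y, ‖B y‖⁻¹ ≤ c * (1 + ‖y‖) ^ γ := by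
  obtain ⟨R, C, hR, hC, hgr⟩ := hgrowth
  obtain ⟨M, hM⟩ := (isCompact_closedBall (0 : E3) R).exists_bound_of_continuousOn
    (hB.norm.inv₀ fun y => norm_ne_zero_iff.mpr (hB0 y)).continuousOn
  refine ⟨max M C⁻¹, le_max_of_le_right (by positivity), fun y => ?_⟩
  have hpow : 1 ≤ (1 + ‖y‖) ^ γ := Real.one_le_rpow (by simp) hγ
  rcases le_total ‖y‖ R with hy | hy
  · have := hM y (by simpa using hy)
    rw [Pi.inv_apply, norm_inv, norm_norm] at this
    calc _ ≤ max M C⁻¹ := this.trans (le_max_left _ _)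
      _ ≤ _ := le_mul_of_one_le_right (le_max_of_le_right (by positivity)) hpow
  · have hy0 : 0 < ‖y‖ := hR.trans_le hy
    calc ‖B y‖⁻¹ ≤ (C / ‖y‖ ^ γ)⁻¹ := inv_anti₀ (by positivity) (hgr y hy)
      _ = C⁻¹ * ‖y‖ ^ γ := by rw [inv_div, div_eq_inv_mul]
      _ ≤ max M C⁻¹ * (1 + ‖y‖) ^ γ := by gcongr; exacts [le_max_right _ _, by linarith]

lemma one_add_rpow_le_two_rpow_mul {p t : ℝ} (hp : 0 ≤ p) (ht : 0 ≤ t) :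
    (1 + t) ^ p ≤ 2 ^ p * (1 + t ^ p) := by
  calc (1 + t) ^ p ≤ (2 * max 1 t) ^ p := by gcongr; linarith [le_max_left 1 t, le_max_right 1 t]
    _ = 2 ^ p * max 1 t ^ p := Real.mul_rpow (by norm_num) (by positivity)
    _ ≤ 2 ^ p * (1 + t ^ p) := by
        gcongr
        rcases max_cases 1 t with ⟨h, -⟩ | ⟨h, -⟩ <;> rw [h]
        · simp [Real.rpow_nonneg ht]
        · linarith

lemma mul_one_add_rpow_add_mul_sq_le {a b γ t : ℝ} (ha : 0 ≤ a) (hb : 0 ≤ b) (hγ : 0 ≤ γ)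
    (ht : 0 ≤ t) :
    a * (1 + t) ^ γ + b * ((1 + t) ^ γ) ^ 2 * t
      ≤ (a + b) * 2 ^ (2 * γ + 1) * (1 + t ^ (2 * γ + 1)) := by
  have hu : 1 ≤ (1 + t) ^ γ := Real.one_le_rpow (by linarith) hγ
  have hu2 : (1 + t) ^ γ ≤ ((1 + t) ^ γ) ^ 2 * (1 + t) := by nlinarith
  have hpow : (1 + t) ^ (2 * γ + 1) = ((1 + t) ^ γ) ^ 2 * (1 + t) := by
    rw [Real.rpow_add (by positivity), Real.rpow_one, mul_comm 2 γ,
      Real.rpow_mul (by positivity), Real.rpow_two]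
  calc _ ≤ (a + b) * (1 + t) ^ (2 * γ + 1) := by
        rw [hpow]
        nlinarith [mul_le_mul_of_nonneg_left hu2 ha, mul_nonneg hb (sq_nonneg ((1 + t) ^ γ))]
    _ ≤ _ := by
        rw [mul_assoc]
        gcongr
        exact one_add_rpow_le_two_rpow_mul (by linarith) ht

theorem integrated_perpendicular_velocity_bound
    (B : E3 → E3) (hB : IsCkBounded 2 B) (hB0 : ∀ y : E3, B y ≠ 0)
    (γ : ℝ) (hγ : 0 ≤ γ) (hgrowth : MinimalGrowth γ B) (x₀ v₀ : E3)
    (xω : ℝ → ℝ → E3) (hxω : ∀ ω : ℝ, 0 < ω → IsLorentzSol B ω x₀ v₀ (xω ω)) :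
    ∃ C > (0:ℝ), ∀ t ≥ (0:ℝ), ∀ ω > (0:ℝ),
      ‖∫ s in (0:ℝ)..t,
          (deriv (xω ω) s
            - (inner ℝ (deriv (xω ω) s) (bdir B (xω ω s)) : ℝ) • bdir B (xω ω s))‖
        ≤ C / ω * (1 + t ^ (2 * γ + 1)) := by
  obtain ⟨hBC, hBbdd⟩ := hB
  have hBdiff : Differentiable ℝ B := hBC.differentiable (by norm_num)
  obtain ⟨M, hM⟩ := hBbdd 1 (by norm_num)
  simp only [norm_iteratedFDeriv_one] at hM
  have hM0 : 0 ≤ M := (norm_nonneg _).trans (hM 0)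
  obtain ⟨c, hc, hinv⟩ := hgrowth.exists_inv_norm_le hBdiff.continuous hB0 hγ
  set A := c * (1 + ‖x₀‖ + ‖v₀‖) ^ γ
  set a := 2 * A * ‖v₀‖
  set b := M * A ^ 2 * ‖v₀‖ ^ 2
  refine ⟨(a + b + 1) * 2 ^ (2 * γ + 1), by positivity, fun t ht ω hω => ?_⟩
  have hsol := hxω ω hω
  calc _ ≤ ω⁻¹ * (2 * (A * (1 + t) ^ γ) * ‖v₀‖ + M * (A * (1 + t) ^ γ) ^ 2 * ‖v₀‖ ^ 2 * t) :=
        hsol.norm_integral_perpendicular_velocity_le hBdiff hB0 hω ht (fun s _ => hM _)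
          (fun s hs => hsol.inv_norm_le_mul_one_add_rpow hc hγ hinv hs)
    _ = ω⁻¹ * (a * (1 + t) ^ γ + b * ((1 + t) ^ γ) ^ 2 * t) := by ring
    _ ≤ ω⁻¹ * ((a + b) * 2 ^ (2 * γ + 1) * (1 + t ^ (2 * γ + 1))) := by
        gcongr
        exact mul_one_add_rpow_add_mul_sq_le (by positivity) (by positivity) hγ ht
    _ ≤ ω⁻¹ * ((a + b + 1) * 2 ^ (2 * γ + 1) * (1 + t ^ (2 * γ + 1))) := by
        gcongr ω⁻¹ * (?_ * _ * _)
        linarith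
    _ = _ := by ring
end
end
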